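/- For d ≥ 1, the graph G_d satisfies 2|S^d| ≤ |V(G_d)| ≤ 3|S^d| + d, and consequently |V(G_d)| ≥ 2^{d+2}. -/

import Mathlib

open SimpleGraph

/-- Sorted list of the tuple set `S^d`: tuples with entries in {1,3} except
the last entry which is in {1,2,3,4}, of length between 1 and `d`,
listed in lexicographic order. -/
def Tl : ℕ → List (List ℕ)
  | 0 => []
  | k+1 => [[1]] ++ (Tl k).map (fun a => 1 :: a) ++ [[2], [3]]
            ++ (Tl k).map (fun a => 3 :: a) ++ [[4]]

/-- Strict lexicographic order on tuples (a proper prefix is smaller). -/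
def lexLt (a b : List ℕ) : Prop := List.Lex (· < ·) a b

def lexLe (a b : List ℕ) : Prop := a = b ∨ lexLt a b

/-- `v` is the successor of `u` in the lexicographic order on `S^d`. -/
def IsSucc (d : ℕ) (u v : List ℕ) : Prop :=
  v ∈ Tl d ∧ lexLt u v ∧ ∀ w ∈ Tl d, lexLt u w → lexLe v w

/-- The interval `[a,b]` in `S^d`. -/
def interval (d : ℕ) (a b : List ℕ) : Set (List ℕ) :=
  {c | c ∈ Tl d ∧ lexLe a c ∧ lexLe c b}

/-- `[a,b]` is a proper interval: no interior element has length `l(a)` or `l(b)`. -/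
def ProperInterval (d : ℕ) (a b : List ℕ) : Prop :=
  a ∈ Tl d ∧ b ∈ Tl d ∧ lexLe a b ∧
  ∀ c ∈ interval d a b, c ≠ a → c ≠ b →
    c.length ≠ a.length ∧ c.length ≠ b.length

/-- The set of left endpoints of flat steps of the interval `[a,b]`. -/
def flatSteps (d : ℕ) (a b : List ℕ) : Set (List ℕ) :=
  {c | c ∈ Tl d ∧ lexLe a c ∧ lexLt c b ∧ ∃ v, IsSucc d c v ∧ v.length = c.length}

/-- Vertices of `G_d`: elements of `S^d`, subdivision vertices, and centers. -/
inductive Vtx where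
  | elt : List ℕ → Vtx
  | sub : ℕ → Fin 2 → Vtx
  | ctr : ℕ → Vtx
deriving DecidableEq

/-- The path `P_d` as a list of vertices: the elements of `S^d` in order,
with two subdivision vertices between consecutive elements of equal length
and one otherwise. -/
def pathList (d : ℕ) : List Vtx :=
  (((Tl d).zipIdx).map Prod.swap).flatMap (fun p =>
    Vtx.elt p.2 :: (match (Tl d)[p.1 + 1]? with
      | none => []
      | some b =>
        if p.2.length = b.length then [Vtx.sub p.1 0, Vtx.sub p.1 1]
        else [Vtx.sub p.1 0]))

/-- `x` and `y` are consecutive in the list `l`. -/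
def ChainAdj {α : Type} (l : List α) (x y : α) : Prop :=
  ∃ i, (l[i]? = some x ∧ l[i+1]? = some y) ∨
       (l[i]? = some y ∧ l[i+1]? = some x)

/-- Adjacency from a center vertex. -/
def ctrAdj (d : ℕ) : Vtx → Vtx → Prop
  | Vtx.ctr k, Vtx.ctr m => k ≠ m ∧ 1 ≤ k ∧ k ≤ d ∧ 1 ≤ m ∧ m ≤ d
  | Vtx.ctr k, Vtx.elt a => 1 ≤ k ∧ k ≤ d ∧ a ∈ Tl d ∧ a.length = k
  | _, _ => False

/-- The vertex set of `G_d`. -/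
def VSet (d : ℕ) : Finset Vtx :=
  (pathList d).toFinset ∪ (Finset.Icc 1 d).image Vtx.ctr

def GdAdj (d : ℕ) (x y : Vtx) : Prop :=
  x ≠ y ∧ (ChainAdj (pathList d) x y ∨ ctrAdj d x y ∨ ctrAdj d y x)

/-- The graph `G_d`. -/
def Gd (d : ℕ) : SimpleGraph {x // x ∈ VSet d} where
  Adj x y := GdAdj d x.1 y.1
  symm := ⟨by
    rintro x y ⟨hne, h⟩
    refine ⟨hne.symm, ?_⟩
    rcases h with ⟨i, hi⟩ | h | h
    · exact Or.inl ⟨i, hi.symm⟩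
    · exact Or.inr (Or.inr h)
    · exact Or.inr (Or.inl h)⟩
  loopless := ⟨fun x h => h.1 rfl⟩

/-- A rank decomposition of a graph `G`: a finite cubic tree together with a
bijection from the vertices of `G` to the leaves of the tree. -/
structure RankDecomp {V : Type} [Fintype V] (G : SimpleGraph V) where
  t : Type
  fin : Fintype t
  tree : SimpleGraph t
  conn : tree.Connected
  acyc : tree.IsAcyclic
  two_le : 2 ≤ Nat.card t
  cubic : ∀ v : t, (tree.neighborSet v).ncard = 1 ∨ (tree.neighborSet v).ncard = 3
  leafEquiv : V ≃ {v : t // (tree.neighborSet v).ncard = 1}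

/-- The set of vertices of `G` whose leaf lies on the side of `a` of
the edge `ab` of the decomposition tree. -/
def RankDecomp.side {V : Type} [Fintype V] {G : SimpleGraph V}
    (D : RankDecomp G) (a b : D.t) : Set V :=
  {x | (D.tree.deleteEdges {s(a, b)}).Reachable (D.leafEquiv x).1 a}

/-- The cutrank function of `G`: the GF(2)-rank of the adjacency submatrix
between `X` and its complement. -/
noncomputable def cutRank {V : Type} [Fintype V] (G : SimpleGraph V) (X : Set V) : ℕ :=
  haveI : Fintype ↥X := Fintype.ofFinite _
  haveI : Fintype ↥(Xᶜ) := Fintype.ofFinite _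
  haveI : DecidableRel G.Adj := Classical.decRel _
  Matrix.rank (Matrix.of (fun (x : ↥X) (y : ↥(Xᶜ)) =>
    if G.Adj x.1 y.1 then (1 : ZMod 2) else 0))

/-- The decomposition `D` has width at most `k`. -/
def RankDecomp.WidthLE {V : Type} [Fintype V] {G : SimpleGraph V}
    (D : RankDecomp G) (k : ℕ) : Prop :=
  ∀ a b : D.t, D.tree.Adj a b → cutRank G (D.side a b) ≤ k

/-- The rank-width of `G`. -/
noncomputable def rankwidth {V : Type} [Fintype V] (G : SimpleGraph V) : ℕ :=
  sInf {k | ∃ D : RankDecomp G, D.WidthLE k}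

/-- `l` is an induced path in `G`: its vertices are distinct and two of them
are adjacent in `G` iff they are consecutive on `l`. -/
def IsInducedPathList {V : Type} (G : SimpleGraph V) (l : List V) : Prop :=
  l.Nodup ∧ ∀ x ∈ l, ∀ y ∈ l, (G.Adj x y ↔ ChainAdj l x y)

/-- The diamond: the complete graph on four vertices minus an edge. -/
def diamond : SimpleGraph (Fin 4) := (⊤ : SimpleGraph (Fin 4)).deleteEdges {s(2, 3)}

/-! Every element of `S^d` lies on `P_d`, and consecutive elements are separated by one or two
subdivision vertices, so `2|S^d| - 1 ≤ |V(P_d)| ≤ 3|S^d|`; the `d` centres come on top. As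
`|S^d| = 2^(d+2) - 4`, the lower bound gives `|V(G_d)| ≥ 2^(d+3) - 8 ≥ 2^(d+2)` once `d ≥ 1`. -/

lemma length_Tl (d : ℕ) : (Tl d).length + 4 = 2 ^ (d + 2) := by
  induction d with
  | zero => simp [Tl]
  | succ k ih =>
    simp only [Tl, List.length_append, List.length_map, List.length_cons, List.length_nil]
    rw [pow_succ]
    omega

lemma nil_not_mem_Tl (d : ℕ) : [] ∉ Tl d := by
  cases d <;> simp [Tl]

lemma Tl_nodup (d : ℕ) : (Tl d).Nodup := by
  induction d with
  | zero => simp [Tl]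
  | succ k ih =>
    simp [Tl, List.nodup_append, List.nodup_map_iff_inj_on ih, nil_not_mem_Tl, or_imp, forall_and]

lemma card_toFinset_Tl (d : ℕ) : (Tl d).toFinset.card = (Tl d).length :=
  List.toFinset_card_of_nodup (Tl_nodup d)

lemma mem_zipIdx_map_swap {α : Type*} {l : List α} {i : ℕ} {a : α} :
    (i, a) ∈ l.zipIdx.map Prod.swap ↔ l[i]? = some a := by
  simp [List.mem_zipIdx_iff_getElem?]

lemma elt_mem_pathList {d : ℕ} {a : List ℕ} (ha : a ∈ Tl d) : Vtx.elt a ∈ pathList d := by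
  obtain ⟨i, hi⟩ := List.mem_iff_getElem?.mp ha
  exact List.mem_flatMap.mpr ⟨(i, a), mem_zipIdx_map_swap.mpr hi, List.mem_cons_self⟩

lemma sub_zero_mem_pathList {d i : ℕ} (hi : i + 1 < (Tl d).length) :
    Vtx.sub i 0 ∈ pathList d := by
  refine List.mem_flatMap.mpr ⟨(i, (Tl d)[i]), mem_zipIdx_map_swap.mpr (by simp), ?_⟩
  simp only [List.getElem?_eq_getElem hi]
  split_ifs <;> simp

lemma ctr_not_mem_pathList (d k : ℕ) : Vtx.ctr k ∉ pathList d := by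
  simp only [pathList, List.mem_flatMap, List.mem_cons, reduceCtorEq, false_or, not_exists, not_and]
  intro p _
  split
  · simp
  · split_ifs <;> simp

lemma length_pathList_le (d : ℕ) : (pathList d).length ≤ 3 * (Tl d).length := by
  rw [pathList, List.length_flatMap]
  refine (List.sum_le_card_nsmul _ 3 ?_).trans (by simp [mul_comm])
  simp only [List.mem_map]
  rintro _ ⟨p, -, rfl⟩
  rw [List.length_cons]
  split
  · simp
  · split_ifs <;> simp

lemma card_VSet (d : ℕ) : (VSet d).card = (pathList d).toFinset.card + d := by
  rw [VSet, Finset.card_union_of_disjoint, Finset.card_image_of_injective _ fun _ _ => Vtx.ctr.inj,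
    Nat.card_Icc, Nat.add_sub_cancel]
  simp only [Finset.disjoint_left, List.mem_toFinset, Finset.mem_image, not_exists, not_and]
  rintro _ hx k - rfl
  exact ctr_not_mem_pathList d k hx

lemma two_mul_length_Tl_le_card_pathList (d : ℕ) :
    2 * (Tl d).length ≤ (pathList d).toFinset.card + 1 := by
  let elts := (Tl d).toFinset.image Vtx.elt
  let subs := (Finset.range ((Tl d).length - 1)).image (Vtx.sub · 0)
  have hsub : elts ∪ subs ⊆ (pathList d).toFinset := by
    simp only [elts, subs, Finset.union_subset_iff, Finset.image_subset_iff, List.mem_toFinset,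
      Finset.mem_range]
    exact ⟨fun a ha => elt_mem_pathList ha, fun i hi => sub_zero_mem_pathList (by omega)⟩
  have hdisj : Disjoint elts subs := by
    simp [elts, subs, Finset.disjoint_left]
  have hcard := Finset.card_le_card hsub
  rw [Finset.card_union_of_disjoint hdisj, Finset.card_image_of_injective _ fun _ _ => Vtx.elt.inj,
    Finset.card_image_of_injective _ fun _ _ h => (Vtx.sub.inj h).1, card_toFinset_Tl,
    Finset.card_range] at hcard
  omega

/-- `2|S^d| ≤ |V(G_d)| ≤ 3|S^d| + d`, and `|V(G_d)| ≥ 2^(d+2)`. -/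
theorem stmt12 (d : ℕ) (hd : 1 ≤ d) :
    2 * (Tl d).toFinset.card ≤ (VSet d).card ∧
    (VSet d).card ≤ 3 * (Tl d).toFinset.card + d ∧
    2 ^ (d + 2) ≤ (VSet d).card := by
  have hS := length_Tl d
  have hpow : 2 ^ 3 ≤ 2 ^ (d + 2) := Nat.pow_le_pow_right (by norm_num) (by omega)
  have hlower := two_mul_length_Tl_le_card_pathList d
  have hupper := (List.toFinset_card_le (pathList d)).trans (length_pathList_le d)
  rw [card_VSet, card_toFinset_Tl]
  omega
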